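/- arXiv:2212.13523 — 4 statements merged into one kernel-verified Lean document; each statement's English description precedes it below -/
import Mathlib

section
/- For every y ∈ ℝ and every λ ≥ 0, the point x* = sgn(y) · max(|y| − λ/2, 0) is a global minimizer of the function x ↦ (y − x)² + λ|x| on ℝ; that is, (y − x*)² + λ|x*| ≤ (y − x)² + λ|x| for all x ∈ ℝ. -/
/-- Soft thresholding operator: `Soft_v(y) = sgn(y) * max(|y| - v, 0)`. -/
noncomputable def softThreshold (v y : ℝ) : ℝ :=
  Real.sign y * max (|y| - v) 0

/-! The conditions `2 |y - z| ≤ l` and `2 (y - z) z = l |z|` say that `2 (y - z)` is a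
subgradient of `l |·|` at `z`; under them the objective at `x` exceeds its value at `z` by
`(x - z)^2 + (l |x| - 2 (y - z) x) ≥ 0`. The residual `y - Soft_v(y)` is `y` clipped to
`[-v, v]`, which satisfies both conditions for `v = l / 2`. -/

theorem sq_sub_add_mul_abs_le_of_mem_subdifferential {y l z : ℝ} (hbound : 2 * |y - z| ≤ l)
    (hcompl : 2 * (y - z) * z = l * |z|) (x : ℝ) :
    (y - z) ^ 2 + l * |z| ≤ (y - x) ^ 2 + l * |x| := by
  have hlin : 2 * (y - z) * x ≤ l * |x| :=
    calc 2 * (y - z) * x ≤ |2 * (y - z) * x| := le_abs_self _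
      _ = 2 * |y - z| * |x| := by rw [abs_mul, abs_mul, abs_two]
      _ ≤ l * |x| := mul_le_mul_of_nonneg_right hbound (abs_nonneg x)
  nlinarith [sq_nonneg (x - z)]

@[simp]
theorem softThreshold_zero_right (v : ℝ) : softThreshold v 0 = 0 := by
  simp [softThreshold]

theorem softThreshold_of_pos (v : ℝ) {y : ℝ} (hy : 0 < y) :
    softThreshold v y = max (y - v) 0 := by
  rw [softThreshold, Real.sign_of_pos hy, abs_of_pos hy, one_mul]

theorem softThreshold_neg (v y : ℝ) : softThreshold v (-y) = -softThreshold v y := by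
  simp [softThreshold, Real.sign_neg]

theorem abs_sub_softThreshold_le {v : ℝ} (hv : 0 ≤ v) (y : ℝ) :
    |y - softThreshold v y| ≤ v := by
  wlog hy : 0 ≤ y generalizing y
  · rw [abs_sub_comm]
    simpa [softThreshold_neg, neg_add_eq_sub] using this (-y) (by linarith)
  rcases hy.eq_or_lt with rfl | hy
  · simpa using hv
  rw [softThreshold_of_pos v hy]
  rcases le_total (y - v) 0 with h | h
  · rw [max_eq_right h, sub_zero, abs_of_pos hy]; linarith
  · rw [max_eq_left h, sub_sub_cancel, abs_of_nonneg hv]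

theorem sub_softThreshold_mul_self (v y : ℝ) :
    (y - softThreshold v y) * softThreshold v y = v * |softThreshold v y| := by
  wlog hy : 0 ≤ y generalizing y
  · have := this (-y) (by linarith)
    rw [softThreshold_neg, abs_neg] at this
    linarith
  rcases hy.eq_or_lt with rfl | hy
  · simp
  rw [softThreshold_of_pos v hy]
  rcases le_total (y - v) 0 with h | h
  · simp [max_eq_right h]
  · rw [max_eq_left h, sub_sub_cancel, abs_of_nonneg h]

/-- For every `y ∈ ℝ` and `λ ≥ 0`, the point `x* = sgn(y) * max(|y| - λ/2, 0)` is a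
global minimizer of `x ↦ (y - x)^2 + λ * |x|` on `ℝ`. -/
theorem softThreshold_isGlobalMin (y l : ℝ) (hl : 0 ≤ l) (x : ℝ) :
    (y - softThreshold (l / 2) y) ^ 2 + l * |softThreshold (l / 2) y| ≤
      (y - x) ^ 2 + l * |x| := by
  refine sq_sub_add_mul_abs_le_of_mem_subdifferential ?_ ?_ x
  · linarith [abs_sub_softThreshold_le (div_nonneg hl zero_le_two) y]
  · linarith [sub_softThreshold_mul_self (l / 2) y]
end

section
/- Let v ≥ 0 and y ∈ ℝ. A point x ∈ ℝ is a global minimizer of the function t ↦ (1/2)(y − t)² + v|t| if and only if either (i) x ≠ 0 and y − x = v · sgn(x), or (ii) x = 0 and |y| ≤ v. Consequently this minimizer equals Soft_v(y) = sgn(y) · max(|y| − v, 0). -/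
/-- `g` is a subgradient of `t ↦ v * |t|` at `x` (for `0 ≤ v`). -/
def IsAbsSubgradient (v x g : ℝ) : Prop :=
  (x ≠ 0 ∧ g = v * Real.sign x) ∨ (x = 0 ∧ |g| ≤ v)

section

variable {v x y g : ℝ}

theorem IsAbsSubgradient.le (hv : 0 ≤ v) (h : IsAbsSubgradient v x g) (t : ℝ) :
    v * |x| + g * (t - x) ≤ v * |t| := by
  rcases h with ⟨hx, rfl⟩ | ⟨rfl, hg⟩
  · rcases hx.lt_or_gt with hx | hx
    · rw [Real.sign_of_neg hx, abs_of_neg hx]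
      nlinarith [neg_abs_le t]
    · rw [Real.sign_of_pos hx, abs_of_pos hx]
      nlinarith [le_abs_self t]
  · calc v * |0| + g * (t - 0) = g * t := by simp
      _ ≤ |g| * |t| := by rw [← abs_mul]; exact le_abs_self _
      _ ≤ v * |t| := mul_le_mul_of_nonneg_right hg (abs_nonneg t)

theorem add_sq_le_of_isAbsSubgradient (hv : 0 ≤ v) (h : IsAbsSubgradient v x (y - x))
    (t : ℝ) :
    (1 / 2) * (y - x) ^ 2 + v * |x| + (1 / 2) * (t - x) ^ 2 ≤
      (1 / 2) * (y - t) ^ 2 + v * |t| := by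
  linear_combination h.le hv t

theorem isAbsSubgradient_sub_iff :
    IsAbsSubgradient v x (y - x) ↔ (x ≠ 0 ∧ y - x = v * Real.sign x) ∨ (x = 0 ∧ |y| ≤ v) := by
  refine or_congr Iff.rfl ⟨?_, ?_⟩ <;> rintro ⟨rfl, h⟩ <;> exact ⟨rfl, by simpa using h⟩

theorem isAbsSubgradient_softThreshold (hv : 0 ≤ v) :
    IsAbsSubgradient v (softThreshold v y) (y - softThreshold v y) := by
  by_cases hy : |y| ≤ v
  · right
    simp [softThreshold, hy]
  · left
    rcases lt_trichotomy y 0 with hneg | rfl | hpos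
    · have hsoft : softThreshold v y = y + v := by
        rw [softThreshold, Real.sign_of_neg hneg, abs_of_neg hneg,
          max_eq_left (by linarith [abs_of_neg hneg])]
        ring
      have : y + v < 0 := by linarith [abs_of_neg hneg]
      rw [hsoft, Real.sign_of_neg this]
      exact ⟨this.ne, by ring⟩
    · exact absurd (by simpa using hv) hy
    · have hsoft : softThreshold v y = y - v := by
        rw [softThreshold, Real.sign_of_pos hpos, abs_of_pos hpos,
          max_eq_left (by linarith [abs_of_pos hpos])]
        ring
      have : 0 < y - v := by linarith [abs_of_pos hpos]
      rw [hsoft, Real.sign_of_pos this]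
      exact ⟨this.ne', by ring⟩

theorem eq_softThreshold_of_forall_le (hv : 0 ≤ v)
    (hmin : ∀ t : ℝ, (1 / 2) * (y - x) ^ 2 + v * |x| ≤ (1 / 2) * (y - t) ^ 2 + v * |t|) :
    x = softThreshold v y := by
  have hgrowth := add_sq_le_of_isAbsSubgradient hv (isAbsSubgradient_softThreshold (y := y) hv) x
  have hsq : (x - softThreshold v y) ^ 2 ≤ 0 := by linarith [hmin (softThreshold v y)]
  exact sub_eq_zero.1 (pow_eq_zero_iff two_ne_zero |>.1 (le_antisymm hsq (sq_nonneg _)))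

end

/-- Let `v ≥ 0` and `y ∈ ℝ`. A point `x ∈ ℝ` is a global minimizer of
`t ↦ (1/2) * (y - t)^2 + v * |t|` if and only if either (i) `x ≠ 0` and
`y - x = v * sgn(x)`, or (ii) `x = 0` and `|y| ≤ v`. Consequently, any such
global minimizer equals `Soft_v(y)`. -/
theorem soft_thresholding_characterization (v y : ℝ) (hv : 0 ≤ v) :
    (∀ x : ℝ,
      ((∀ t : ℝ, (1 / 2) * (y - x) ^ 2 + v * |x| ≤ (1 / 2) * (y - t) ^ 2 + v * |t|) ↔
        ((x ≠ 0 ∧ y - x = v * Real.sign x) ∨ (x = 0 ∧ |y| ≤ v)))) ∧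
    (∀ x : ℝ,
      (∀ t : ℝ, (1 / 2) * (y - x) ^ 2 + v * |x| ≤ (1 / 2) * (y - t) ^ 2 + v * |t|) →
        x = softThreshold v y) := by
  refine ⟨fun x => ?_, fun x => eq_softThreshold_of_forall_le hv⟩
  rw [← isAbsSubgradient_sub_iff]
  refine ⟨fun hmin => ?_, fun hopt t => ?_⟩
  · rw [eq_softThreshold_of_forall_le hv hmin]
    exact isAbsSubgradient_softThreshold hv
  · linarith [add_sq_le_of_isAbsSubgradient hv hopt t, sq_nonneg (t - x)]
end

section
/- Let H, W be positive integers, let X ∈ ℝ^{H×W} be a fixed matrix, let M ∈ {0,1}^{H×W} be a fixed binary mask, and let (N_{(i,j)})_{1≤i≤H, 1≤j≤W} be independent real Gaussian random variables with mean 0 and variances σ_{(i,j)}² ≥ 0. Let f : ℝ^{H×W} → ℝ^{H×W} be a measurable map, set Y = X + N, Ŷ = M ⊙ Y, and F = f(Ŷ), and assume each entry F_{(i,j)} is square-integrable. Then for every index (i,j) with M_{(i,j)} = 0, the expectation E[ N_{(i,j)} · (X_{(i,j)} − F_{(i,j)}) ] = 0. -/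
open MeasureTheory ProbabilityTheory Finset

/-- Let `X ∈ ℝ^{H×W}` be fixed, `M ∈ {0,1}^{H×W}` a fixed binary mask, and
`(N_{(i,j)})` independent Gaussian random variables with mean `0` and variances
`σ_{(i,j)}² ≥ 0`.  Let `f` be measurable, `Y = X + N`, `Ŷ = M ⊙ Y`, `F = f(Ŷ)`, with
each entry of `F` square-integrable.  Then for every index `(i,j)` with `M_{(i,j)} = 0`
we have `E[N_{(i,j)} · (X_{(i,j)} − F_{(i,j)})] = 0`. -/
theorem masked_noise_uncorrelated
    {Ω : Type*} [MeasurableSpace Ω] (μ : Measure Ω) [IsProbabilityMeasure μ]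
    (H W : ℕ) (hH : 0 < H) (hW : 0 < W)
    (X M : Fin H → Fin W → ℝ) (hM : ∀ i j, M i j = 0 ∨ M i j = 1)
    (N : Fin H × Fin W → Ω → ℝ) (hNmeas : ∀ p, Measurable (N p))
    (σ : Fin H → Fin W → ℝ) (hσ : ∀ i j, 0 ≤ σ i j)
    (hNgauss : ∀ i j, Measure.map (N (i, j)) μ = gaussianReal 0 ((σ i j).toNNReal ^ 2))
    (hNindep : iIndepFun N μ)
    (f : (Fin H → Fin W → ℝ) → Fin H → Fin W → ℝ) (hf : Measurable f)
    (F : Ω → Fin H → Fin W → ℝ)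
    (hF : F = fun ω => f (fun i j => M i j * (X i j + N (i, j) ω)))
    (hFL2 : ∀ i j, MemLp (fun ω => F ω i j) 2 μ)
    (i : Fin H) (j : Fin W) (hMij : M i j = 0) :
    ∫ ω, N (i, j) ω * (X i j - F ω i j) ∂μ = 0 := by
  classical
  set v : NNReal := (σ i j).toNNReal ^ 2 with hv
  -- mean of the gaussian coordinate is zero
  have hNmean : ∫ ω, N (i, j) ω ∂μ = 0 := by
    have h1 : ∫ ω, N (i, j) ω ∂μ = ∫ x, x ∂(gaussianReal 0 v) := by
      rw [← hNgauss i j]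
      exact (integral_map (hNmeas (i, j)).aemeasurable aestronglyMeasurable_id).symm
    have hmap : (gaussianReal 0 v).map (fun x => (-1 : ℝ) * x) = gaussianReal 0 v := by
      have := gaussianReal_map_const_mul (μ := 0) (v := v) (-1)
      simpa using this
    have h2 : ∫ x, x ∂(gaussianReal 0 v) = ∫ x, (-1 : ℝ) * x ∂(gaussianReal 0 v) := by
      conv_lhs => rw [← hmap]
      exact integral_map ((measurable_id.const_mul (-1)).aemeasurable) aestronglyMeasurable_id
    have h3 : ∫ x, (-1 : ℝ) * x ∂(gaussianReal 0 v) = - ∫ x, x ∂(gaussianReal 0 v) := by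
      simp only [neg_one_mul]
      exact integral_neg (fun x : ℝ => x)
    rw [h1]
    linarith [h2, h3]
  -- independence of N (i,j) and the masked output entry
  set S : Finset (Fin H × Fin W) := {(i, j)}ᶜ with hS
  set T : Finset (Fin H × Fin W) := {(i, j)} with hT
  have hST : Disjoint S T := by
    simp [hS, hT, Finset.disjoint_left]
  have hbase := hNindep.indepFun_finset S T hST hNmeas
  set φ : (S → ℝ) → ℝ := fun n =>
    X i j - f (fun a b => M a b * (X a b +
      (if h : ((a, b) : Fin H × Fin W) ∈ S then n ⟨(a, b), h⟩ else 0))) i j with hφdef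
  set ψ : (T → ℝ) → ℝ := fun n => n ⟨(i, j), Finset.mem_singleton_self _⟩ with hψdef
  have hφ : Measurable φ := by
    apply measurable_const.sub
    refine ((measurable_pi_apply j).comp ((measurable_pi_apply i).comp hf)).comp ?_
    refine measurable_pi_lambda _ (fun a => measurable_pi_lambda _ (fun b => ?_))
    refine measurable_const.mul (measurable_const.add ?_)
    by_cases h : ((a, b) : Fin H × Fin W) ∈ S
    · simp only [dif_pos h]
      exact measurable_pi_apply _
    · simp only [dif_neg h]
      exact measurable_const
  have hψ : Measurable ψ := measurable_pi_apply _
  have hcomp : IndepFun (fun ω => X i j - F ω i j) (N (i, j)) μ := by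
    have h := (hbase.comp hφ hψ)
    have hL : (φ ∘ fun ω (p : S) => N p ω) = fun ω => X i j - F ω i j := by
      funext ω
      simp only [Function.comp_apply, hφdef, hF]
      congr 2
      funext a b
      by_cases hab : ((a, b) : Fin H × Fin W) = (i, j)
      · have : ((a, b) : Fin H × Fin W) ∉ S := by simp [hS, hT, hab]
        rw [dif_neg this]
        obtain ⟨rfl, rfl⟩ := Prod.mk.injEq .. ▸ hab
        simp [hMij]
      · have : ((a, b) : Fin H × Fin W) ∈ S := by simp [hS, hT, hab]
        rw [dif_pos this]
    have hR : (ψ ∘ fun ω (p : T) => N p ω) = N (i, j) := rfl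
    rwa [hL, hR] at h
  have hNaesm : AEStronglyMeasurable (N (i, j)) μ := (hNmeas (i, j)).aestronglyMeasurable
  have hFaesm : AEStronglyMeasurable (fun ω => X i j - F ω i j) μ :=
    aestronglyMeasurable_const.sub (hFL2 i j).1
  have : ∫ ω, N (i, j) ω * (X i j - F ω i j) ∂μ = (∫ ω, N (i, j) ω ∂μ) * ∫ ω, X i j - F ω i j ∂μ :=
    hcomp.symm.integral_mul_eq_mul_integral hNaesm hFaesm
  rw [this, hNmean, zero_mul]
end

section
/- Let H, W be positive integers, let X ∈ ℝ^{H×W} be a fixed matrix, let M ∈ {0,1}^{H×W} be a fixed binary mask, and let (N_{(i,j)})_{1≤i≤H, 1≤j≤W} be independent real Gaussian random variables with mean 0 and variances σ_{(i,j)}² ≥ 0. Let f : ℝ^{H×W} → ℝ^{H×W} be a measurable map, set Y = X + N and F = f(M ⊙ Y), and assume each entry F_{(i,j)} is square-integrable. Then E[ ‖(Y − F) ⊙ (1 − M)‖_F² ] = E[ ‖(X − F) ⊙ (1 − M)‖_F² ] + ‖σ ⊙ (1 − M)‖_F², where σ ∈ ℝ^{H×W} is the matrix of standard deviations σ_{(i,j)}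 and 1 denotes the all-ones matrix. -/
open MeasureTheory ProbabilityTheory Finset

section Aux
open Real
open scoped NNReal ENNReal

lemma aux_moment1 {b : ℝ} (hb : 0 < b) : ∫ x : ℝ, x * Real.exp (-b * x ^ 2) = 0 := by
  have hderiv : ∀ x : ℝ, HasDerivAt (fun x : ℝ => -(2*b)⁻¹ * Real.exp (-b * x ^ 2))
      (x * Real.exp (-b * x ^ 2)) x := by
    intro x
    have h1 : HasDerivAt (fun x : ℝ => -b * x ^ 2) (-b * (2 * x)) x := by
      simpa using ((hasDerivAt_pow 2 x).const_mul (-b))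
    have h2 := (h1.exp).const_mul (-(2*b)⁻¹)
    refine h2.congr_deriv ?_
    rw [show -(2*b)⁻¹ * (Real.exp (-b * x ^ 2) * (-b * (2 * x))) = ((2*b)⁻¹ * (2*b)) * (x * Real.exp (-b * x ^ 2)) by ring,
      inv_mul_cancel₀ (by positivity), one_mul]
  have := MeasureTheory.integral_eq_zero_of_hasDerivAt_of_integrable hderiv
    (integrable_mul_exp_neg_mul_sq hb)
    ((integrable_exp_neg_mul_sq hb).const_mul _)
  simpa using this

lemma aux_int_sq_exp {b : ℝ} (hb : 0 < b) :
    Integrable (fun x : ℝ => x ^ 2 * Real.exp (-b * x ^ 2)) := by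
  have := integrable_rpow_mul_exp_neg_mul_sq hb (s := 2) (by norm_num)
  simpa [Real.rpow_natCast] using this

lemma aux_moment2 {b : ℝ} (hb : 0 < b) :
    ∫ x : ℝ, x ^ 2 * Real.exp (-b * x ^ 2)
      = (2*b)⁻¹ * ∫ x : ℝ, Real.exp (-b * x ^ 2) := by
  have hderiv : ∀ x : ℝ, HasDerivAt (fun x : ℝ => x * Real.exp (-b * x ^ 2))
      (Real.exp (-b * x ^ 2) - 2 * b * (x ^ 2 * Real.exp (-b * x ^ 2))) x := by
    intro x
    have h1 : HasDerivAt (fun x : ℝ => -b * x ^ 2) (-b * (2 * x)) x := by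
      simpa using ((hasDerivAt_pow 2 x).const_mul (-b))
    have h2 := (hasDerivAt_id x).mul h1.exp
    simp only [id] at h2
    refine h2.congr_deriv ?_
    ring
  have hint : Integrable (fun x : ℝ =>
      Real.exp (-b * x ^ 2) - 2 * b * (x ^ 2 * Real.exp (-b * x ^ 2))) :=
    (integrable_exp_neg_mul_sq hb).sub ((aux_int_sq_exp hb).const_mul _)
  have h0 := MeasureTheory.integral_eq_zero_of_hasDerivAt_of_integrable hderiv hint
    (integrable_mul_exp_neg_mul_sq hb)
  rw [integral_sub (integrable_exp_neg_mul_sq hb) ((aux_int_sq_exp hb).const_mul _),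
    integral_const_mul, sub_eq_zero] at h0
  have hb' : (2:ℝ) * b ≠ 0 := by positivity
  rw [h0, ← mul_assoc, inv_mul_cancel₀ hb', one_mul]

lemma aux_pdf_eq (v : ℝ≥0) (hv : v ≠ 0) (x : ℝ) :
    gaussianPDFReal 0 v x = (Real.sqrt (2 * Real.pi * v))⁻¹ * Real.exp (-(2*(v:ℝ))⁻¹ * x ^ 2) := by
  have hv' : (v:ℝ) ≠ 0 := by exact_mod_cast hv
  rw [gaussianPDFReal, sub_zero]
  congr 2
  ring

lemma aux_integral_gauss (v : ℝ≥0) (g : ℝ → ℝ) (hg : Measurable g) (hv : v ≠ 0) :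
    ∫ x, g x ∂(gaussianReal 0 v) = ∫ x, gaussianPDFReal 0 v x * g x := by
  rw [gaussianReal_of_var_ne_zero _ hv, gaussianPDF_def]
  have : ∀ x : ℝ, ENNReal.ofReal (gaussianPDFReal 0 v x)
      = ((gaussianPDFReal 0 v x).toNNReal : ℝ≥0∞) := fun _ => rfl
  simp_rw [this]
  rw [integral_withDensity_eq_integral_smul
    ((measurable_gaussianPDFReal 0 v).real_toNNReal) g]
  congr 1
  ext x
  simp [NNReal.smul_def, Real.coe_toNNReal _ (gaussianPDFReal_nonneg 0 v x)]

lemma aux_gauss_mean (v : ℝ≥0) : ∫ x, x ∂(gaussianReal 0 v) = 0 := by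
  by_cases hv : v = 0
  · simp [hv]
  · rw [aux_integral_gauss v (fun x => x) measurable_id hv]
    have hvpos : (0:ℝ) < v := by positivity
    have hb : (0:ℝ) < (2*(v:ℝ))⁻¹ := by positivity
    have hrw : (fun x : ℝ => gaussianPDFReal 0 v x * x)
        = fun x : ℝ => (Real.sqrt (2 * Real.pi * v))⁻¹ *
            (x * Real.exp (-(2*(v:ℝ))⁻¹ * x ^ 2)) := by
      funext x; rw [aux_pdf_eq v hv]; ring
    rw [hrw, integral_const_mul, aux_moment1 hb, mul_zero]

lemma aux_gauss_sq (v : ℝ≥0) : ∫ x, x ^ 2 ∂(gaussianReal 0 v) = v := by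
  by_cases hv : v = 0
  · simp [hv]
  · rw [aux_integral_gauss v (fun x => x ^ 2) (measurable_id.pow_const 2) hv]
    have hvpos : (0:ℝ) < v := by positivity
    have hb : (0:ℝ) < (2*(v:ℝ))⁻¹ := by positivity
    have hv' : (v:ℝ) ≠ 0 := by exact_mod_cast hv
    have hone := integral_gaussianPDFReal_eq_one 0 hv
    simp_rw [aux_pdf_eq v hv] at hone
    rw [integral_const_mul] at hone
    have hrw : (fun x : ℝ => gaussianPDFReal 0 v x * x ^ 2)
        = fun x : ℝ => (Real.sqrt (2 * Real.pi * v))⁻¹ *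
            (x ^ 2 * Real.exp (-(2*(v:ℝ))⁻¹ * x ^ 2)) := by
      funext x; rw [aux_pdf_eq v hv]; ring
    rw [hrw, integral_const_mul, aux_moment2 hb]
    have : (Real.sqrt (2 * Real.pi * v))⁻¹ *
        ((2 * (2*(v:ℝ))⁻¹)⁻¹ * ∫ x : ℝ, Real.exp (-(2*(v:ℝ))⁻¹ * x ^ 2))
        = (2 * (2*(v:ℝ))⁻¹)⁻¹ * ((Real.sqrt (2 * Real.pi * v))⁻¹ *
          ∫ x : ℝ, Real.exp (-(2*(v:ℝ))⁻¹ * x ^ 2)) := by ring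
    rw [this, hone, mul_one]
    field_simp

lemma aux_integrable_sq_gauss (v : ℝ≥0) :
    Integrable (fun x : ℝ => x ^ 2) (gaussianReal 0 v) := by
  by_cases hv : v = 0
  · subst hv
    simp only [gaussianReal_zero_var]
    refine (integrable_zero _ _ _).congr ?_
    rw [Filter.EventuallyEq, ae_dirac_eq]
    simp
  · rw [gaussianReal_of_var_ne_zero _ hv, gaussianPDF_def]
    have hvpos : (0:ℝ) < v := by positivity
    have hb : (0:ℝ) < (2*(v:ℝ))⁻¹ := by positivity
    rw [integrable_withDensity_iff (measurable_gaussianPDFReal 0 v).ennreal_ofReal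
      (ae_of_all _ fun x => ENNReal.ofReal_lt_top)]
    apply Integrable.congr (((aux_int_sq_exp hb).const_mul (Real.sqrt (2 * Real.pi * v))⁻¹))
    filter_upwards with x
    rw [aux_pdf_eq v hv, ENNReal.toReal_ofReal]
    · ring
    · rw [← aux_pdf_eq v hv]; exact gaussianPDFReal_nonneg 0 v x

end Aux

/-- Let `X ∈ ℝ^{H×W}` be fixed, `M ∈ {0,1}^{H×W}` a fixed binary mask, and
`(N_{(i,j)})` independent Gaussian random variables with mean `0` and variances
`σ_{(i,j)}² ≥ 0`.  Let `f` be measurable, `Y = X + N`, `F = f(M ⊙ Y)`, with each entry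
of `F` square-integrable.  Then
`E[‖(Y − F) ⊙ (1 − M)‖_F²] = E[‖(X − F) ⊙ (1 − M)‖_F²] + ‖σ ⊙ (1 − M)‖_F²`. -/
theorem masked_selfsupervised_loss_expectation
    {Ω : Type*} [MeasurableSpace Ω] (μ : Measure Ω) [IsProbabilityMeasure μ]
    (H W : ℕ) (hH : 0 < H) (hW : 0 < W)
    (X M : Fin H → Fin W → ℝ) (hM : ∀ i j, M i j = 0 ∨ M i j = 1)
    (N : Fin H × Fin W → Ω → ℝ) (hNmeas : ∀ p, Measurable (N p))
    (σ : Fin H → Fin W → ℝ) (hσ : ∀ i j, 0 ≤ σ i j)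
    (hNgauss : ∀ i j, Measure.map (N (i, j)) μ = gaussianReal 0 ((σ i j).toNNReal ^ 2))
    (hNindep : iIndepFun N μ)
    (f : (Fin H → Fin W → ℝ) → Fin H → Fin W → ℝ) (hf : Measurable f)
    (Y : Ω → Fin H → Fin W → ℝ) (hY : Y = fun ω i j => X i j + N (i, j) ω)
    (F : Ω → Fin H → Fin W → ℝ)
    (hF : F = fun ω => f (fun i j => M i j * Y ω i j))
    (hFL2 : ∀ i j, MemLp (fun ω => F ω i j) 2 μ) :
    ∫ ω, (∑ i : Fin H, ∑ j : Fin W, ((Y ω i j - F ω i j) * (1 - M i j)) ^ 2) ∂μ =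
      (∫ ω, (∑ i : Fin H, ∑ j : Fin W, ((X i j - F ω i j) * (1 - M i j)) ^ 2) ∂μ) +
        ∑ i : Fin H, ∑ j : Fin W, (σ i j * (1 - M i j)) ^ 2 := by
  classical
  -- the set of positions where the mask is 1
  set S : Finset (Fin H × Fin W) := Finset.univ.filter (fun p => M p.1 p.2 = 1) with hS
  -- square integrability of the noise
  have hn2 : ∀ p : Fin H × Fin W, MemLp (N p) 2 μ := by
    rintro ⟨i, j⟩
    refine (memLp_two_iff_integrable_sq (hNmeas _).aestronglyMeasurable).mpr ?_
    have h1 : Integrable (fun x : ℝ => x ^ 2) (Measure.map (N (i, j)) μ) := by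
      rw [hNgauss i j]; exact aux_integrable_sq_gauss _
    have := (integrable_map_measure (g := fun x : ℝ => x ^ 2)
      (measurable_id.pow_const 2).aestronglyMeasurable (hNmeas (i, j)).aemeasurable).mp h1
    exact this
  -- mean and second moment of the noise
  have hEn : ∀ i j, ∫ ω, N (i, j) ω ∂μ = 0 := by
    intro i j
    have h1 : ∫ ω, N (i, j) ω ∂μ = ∫ x, x ∂(Measure.map (N (i, j)) μ) :=
      (integral_map (hNmeas _).aemeasurable aestronglyMeasurable_id).symm
    rw [h1, hNgauss i j, aux_gauss_mean]
  have hEn2 : ∀ i j, ∫ ω, (N (i, j) ω) ^ 2 ∂μ = (σ i j) ^ 2 := by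
    intro i j
    have h1 : ∫ ω, (N (i, j) ω) ^ 2 ∂μ = ∫ x, x ^ 2 ∂(Measure.map (N (i, j)) μ) :=
      (integral_map (hNmeas _).aemeasurable (measurable_id.pow_const 2).aestronglyMeasurable).symm
    rw [h1, hNgauss i j, aux_gauss_sq]
    push_cast
    rw [Real.coe_toNNReal _ (hσ i j)]
  -- key per-entry statement
  have key : ∀ i j,
      Integrable (fun ω => ((Y ω i j - F ω i j) * (1 - M i j)) ^ 2) μ ∧
      Integrable (fun ω => ((X i j - F ω i j) * (1 - M i j)) ^ 2) μ ∧
      ∫ ω, ((Y ω i j - F ω i j) * (1 - M i j)) ^ 2 ∂μ =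
        (∫ ω, ((X i j - F ω i j) * (1 - M i j)) ^ 2 ∂μ) + (σ i j * (1 - M i j)) ^ 2 := by
    intro i j
    rcases hM i j with h | h
    · -- masked-out position: M i j = 0
      -- independence of N (i,j) from F i j
      have hmemS : (i, j) ∉ S := by simp [hS, h]
      have hdisj : Disjoint ({(i, j)} : Finset (Fin H × Fin W)) S :=
        Finset.disjoint_singleton_left.mpr hmemS
      have hInd0 := hNindep.indepFun_finset {(i, j)} S hdisj hNmeas
      set g' : ({p : Fin H × Fin W // p ∈ S} → ℝ) → ℝ := fun v =>
        f (fun a b => M a b * (X a b + if hab : (a, b) ∈ S then v ⟨(a, b), hab⟩ else 0)) i j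
        with hg'
      have hG : Measurable (fun v : {p : Fin H × Fin W // p ∈ S} → ℝ =>
          (fun a b => M a b * (X a b + if hab : (a, b) ∈ S then v ⟨(a, b), hab⟩ else 0))) := by
        refine measurable_pi_lambda _ fun a => measurable_pi_lambda _ fun b => ?_
        by_cases hab : (a, b) ∈ S
        · simp only [hab, dif_pos]
          exact (measurable_const.add (measurable_pi_apply _)).const_mul _
        · simp only [hab, dif_neg, not_false_iff]
          exact measurable_const
      have hg'meas : Measurable g' :=
        (measurable_pi_apply j).comp ((measurable_pi_apply i).comp (hf.comp hG))
      have hFcomp : (fun ω => F ω i j)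
          = g' ∘ (fun ω (p : {p : Fin H × Fin W // p ∈ S}) => N p ω) := by
        funext ω
        simp only [hF, hY, Function.comp, hg']
        congr 1
        funext a b
        rcases hM a b with hab | hab
        · simp [hab]
        · have hmem : (a, b) ∈ S := by simp [hS, hab]
          simp [hab, hmem]
      have hIndepF : IndepFun (N (i, j)) (fun ω => F ω i j) μ := by
        rw [hFcomp]
        have := hInd0.comp
          (φ := fun v : ({(i, j)} : Finset (Fin H × Fin W)) → ℝ =>
            v ⟨(i, j), Finset.mem_singleton_self _⟩)
          (ψ := g') (measurable_pi_apply (X := fun _ => ℝ) _) hg'meas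
        exact this
      -- main computation
      set A : Ω → ℝ := fun ω => X i j - F ω i j with hA
      have hA2 : MemLp A 2 μ := (memLp_const (X i j)).sub (hFL2 i j)
      have hIndep : IndepFun (N (i, j)) A μ := by
        have := hIndepF.comp (φ := id) (ψ := fun t => X i j - t)
          measurable_id (measurable_const.sub measurable_id)
        exact this
      have hA2sq : Integrable (fun ω => A ω ^ 2) μ :=
        (memLp_two_iff_integrable_sq hA2.1).mp hA2
      have hn2sq : Integrable (fun ω => N (i, j) ω ^ 2) μ :=
        (memLp_two_iff_integrable_sq (hNmeas _).aestronglyMeasurable).mp (hn2 (i, j))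
      have hAn : Integrable (fun ω => A ω * N (i, j) ω) μ := by
        have := ((hn2 (i, j)).smul hA2
          (r := 1) (hpqr := ⟨by rw [ENNReal.inv_two_add_inv_two, inv_one]⟩))
        exact memLp_one_iff_integrable.mp this
      have hAint : Integrable A μ := hA2.integrable one_le_two
      have hnint : Integrable (N (i, j)) μ := (hn2 (i, j)).integrable one_le_two
      have hintAn : ∫ ω, A ω * N (i, j) ω ∂μ = 0 := by
        have h2 := IndepFun.integral_mul_eq_mul_integral hIndep.symm hAint.1 hnint.1
        simp only [Pi.mul_apply] at h2
        rw [h2, hEn i j, mul_zero]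
      have hYF : ∀ ω, Y ω i j - F ω i j = A ω + N (i, j) ω := by
        intro ω; simp only [hY, hA]; ring
      have hexp : (fun ω => (A ω + N (i, j) ω) ^ 2)
          = fun ω => A ω ^ 2 + (2 * (A ω * N (i, j) ω) + N (i, j) ω ^ 2) := by
        funext ω; ring
      have hintsum : Integrable (fun ω =>
          A ω ^ 2 + (2 * (A ω * N (i, j) ω) + N (i, j) ω ^ 2)) μ :=
        hA2sq.add ((hAn.const_mul 2).add hn2sq)
      refine ⟨?_, ?_, ?_⟩
      · simp only [h, sub_zero, mul_one]
        refine hintsum.congr ?_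
        filter_upwards with ω
        rw [hYF ω]
        ring
      · simpa [h] using hA2sq
      · simp only [h, sub_zero, mul_one]
        have hL : ∫ ω, (Y ω i j - F ω i j) ^ 2 ∂μ
            = ∫ ω, A ω ^ 2 + (2 * (A ω * N (i, j) ω) + N (i, j) ω ^ 2) ∂μ := by
          congr 1
          funext ω
          rw [hYF ω]; ring
        have hi2 : Integrable (fun ω => 2 * (A ω * N (i, j) ω) + N (i, j) ω ^ 2) μ :=
          (hAn.const_mul 2).add hn2sq
        have hi3 : Integrable (fun ω => 2 * (A ω * N (i, j) ω)) μ := hAn.const_mul 2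
        rw [hL, integral_add hA2sq hi2, integral_add hi3 hn2sq, integral_const_mul,
          hintAn, hEn2 i j]
        simp [hA]
    · -- kept position: M i j = 1
      refine ⟨?_, ?_, ?_⟩
      · simpa [h] using (integrable_const (0:ℝ))
      · simpa [h] using (integrable_const (0:ℝ))
      · simp [h]
  -- assemble
  have hintL : ∀ i : Fin H, Integrable
      (fun ω => ∑ j : Fin W, ((Y ω i j - F ω i j) * (1 - M i j)) ^ 2) μ :=
    fun i => integrable_finset_sum _ fun j _ => (key i j).1
  have hintR : ∀ i : Fin H, Integrable
      (fun ω => ∑ j : Fin W, ((X i j - F ω i j) * (1 - M i j)) ^ 2) μ :=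
    fun i => integrable_finset_sum _ fun j _ => (key i j).2.1
  rw [integral_finset_sum _ (fun i _ => hintL i),
    integral_finset_sum _ (fun i _ => hintR i), ← Finset.sum_add_distrib]
  refine Finset.sum_congr rfl fun i _ => ?_
  rw [integral_finset_sum _ (fun j _ => (key i j).1),
    integral_finset_sum _ (fun j _ => (key i j).2.1), ← Finset.sum_add_distrib]
  exact Finset.sum_congr rfl fun j _ => (key i j).2.2
end
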